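/- For any matrix $A \in \mathbb{R}^{n\times p}$ and any factorization $A = UV^T$ with $U \in \mathbb{R}^{n\times r}$, $V \in \mathbb{R}^{p\times r}$, the nuclear norm satisfies $\|A\|_* \le \frac{1}{2}(\|U\|_F^2 + \|V\|_F^2)$. -/

import Mathlib

open Matrix RealInnerProductSpace

private lemma inner_eq_dot' {k : ℕ} (x y : EuclideanSpace ℝ (Fin k)) : ⟪x, y⟫ = ⇑x ⬝ᵥ ⇑y := by
  simp [PiLp.inner_apply, dotProduct]
  exact Finset.sum_congr rfl fun _ _ => mul_comm _ _

private lemma norm_sq_eq_dot' {k : ℕ} (x : EuclideanSpace ℝ (Fin k)) : ‖x‖ ^ 2 = ⇑x ⬝ᵥ ⇑x := by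
  rw [← real_inner_self_eq_norm_sq, inner_eq_dot']

private lemma dot_amgm' {k : ℕ} (x y : Fin k → ℝ) :
    x ⬝ᵥ y ≤ (x ⬝ᵥ x + y ⬝ᵥ y) / 2 := by
  have h0 : 0 ≤ (x - y) ⬝ᵥ (x - y) := by
    simp only [dotProduct, Pi.sub_apply]
    exact Finset.sum_nonneg fun i _ => mul_self_nonneg _
  have hexp : (x - y) ⬝ᵥ (x - y) = x ⬝ᵥ x - 2 * (x ⬝ᵥ y) + y ⬝ᵥ y := by
    simp only [sub_dotProduct, dotProduct_sub]
    rw [dotProduct_comm y x]; ring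
  linarith [hexp ▸ h0]

private lemma trace_eq_sum_eigen' {m : ℕ} {M : Matrix (Fin m) (Fin m) ℝ} (hM : M.IsHermitian) :
    M.trace = ∑ i, hM.eigenvalues i := by
  conv_lhs => rw [hM.spectral_theorem]
  rw [Unitary.conjStarAlgAut_apply, Matrix.trace_mul_cycle, Unitary.coe_star_mul_self]
  simp [Matrix.trace_diagonal]


/-- The nuclear norm of a real matrix: trace of `(AᴴA)^{1/2}`,
i.e. the sum of the singular values of `A`. -/
noncomputable def nuclearNorm {n p : ℕ} (A : Matrix (Fin n) (Fin p) ℝ) : ℝ :=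
  (((Matrix.posSemidef_conjTranspose_mul_self A).1.eigenvectorUnitary : Matrix (Fin p) (Fin p) ℝ) *
    diagonal ((RCLike.ofReal : ℝ → ℝ) ∘ Real.sqrt ∘ (Matrix.posSemidef_conjTranspose_mul_self A).1.eigenvalues) *
    (star (Matrix.posSemidef_conjTranspose_mul_self A).1.eigenvectorUnitary : Matrix (Fin p) (Fin p) ℝ)).trace

/-- Squared Frobenius norm. -/
def frobSq {n p : ℕ} (A : Matrix (Fin n) (Fin p) ℝ) : ℝ :=
  ∑ i, ∑ j, (A i j) ^ 2

/-- for any factorization `A = U Vᵀ`,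
`‖A‖_* ≤ (‖U‖_F² + ‖V‖_F²)/2`. -/
theorem stmt5 (n p r : ℕ) (A : Matrix (Fin n) (Fin p) ℝ)
    (U : Matrix (Fin n) (Fin r) ℝ) (V : Matrix (Fin p) (Fin r) ℝ)
    (h : A = U * Vᵀ) :
    nuclearNorm A ≤ (frobSq U + frobSq V) / 2 := by
  classical
  have hB := Matrix.posSemidef_conjTranspose_mul_self A
  have hSH : (Aᴴ * A).IsHermitian := hB.1
  set μ : Fin p → ℝ := fun i => Real.sqrt (hSH.eigenvalues i) with hμdef
  set q := hSH.eigenvectorBasis with hqdef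
  have hμ0 : ∀ i, 0 ≤ μ i := fun i => Real.sqrt_nonneg _
  -- eigen equation for B = AᴴA
  have hBq : ∀ i, (Aᴴ * A) *ᵥ ⇑(q i) = (μ i ^ 2) • ⇑(q i) := by
    intro i
    rw [hSH.mulVec_eigenvectorBasis]
    congr 1
    exact (Real.sq_sqrt (hB.eigenvalues_nonneg i)).symm
  have hqq : ∀ i j, ⇑(q i) ⬝ᵥ ⇑(q j) = if i = j then 1 else 0 := by
    intro i j
    have := orthonormal_iff_ite.mp q.orthonormal i j
    simpa [PiLp.inner_apply, dotProduct, mul_comm] using this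
  have hcross : ∀ i j, (A *ᵥ ⇑(q i)) ⬝ᵥ (A *ᵥ ⇑(q j)) = μ j ^ 2 * (if i = j then 1 else 0) := by
    intro i j
    have h1 : ⇑(q i) ⬝ᵥ ((Aᴴ * A) *ᵥ ⇑(q j)) = (A *ᵥ ⇑(q i)) ⬝ᵥ (A *ᵥ ⇑(q j)) := by
      conv_lhs => rw [← mulVec_mulVec, dotProduct_mulVec,
        conjTranspose_eq_transpose_of_trivial, vecMul_transpose]
    rw [← h1, hBq, dotProduct_smul, smul_eq_mul, hqq]
  -- the left singular-ish vectors
  set u : Fin p → EuclideanSpace ℝ (Fin n) := fun i => WithLp.toLp 2 ((μ i)⁻¹ • (A *ᵥ ⇑(q i))) with hudef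
  have hudot : ∀ i j, ⇑(u i) ⬝ᵥ (A *ᵥ ⇑(q j)) = (μ i)⁻¹ * (μ j ^ 2 * (if i = j then 1 else 0)) := by
    intro i j
    show ((μ i)⁻¹ • (A *ᵥ ⇑(q i))) ⬝ᵥ (A *ᵥ ⇑(q j)) = _
    rw [smul_dotProduct, smul_eq_mul, hcross]
  -- μ i = ⟨u i, A q i⟩
  have hkey : ∀ i, μ i = ⇑(u i) ⬝ᵥ (A *ᵥ ⇑(q i)) := by
    intro i
    rw [hudot]
    rcases eq_or_ne (μ i) 0 with h0 | h0
    · simp [h0]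
    · field_simp [h0]; simp
  -- rewrite A q i = U (Vᵀ q i) and bound each term
  have hbound : ∀ i, μ i ≤ ((Uᵀ *ᵥ ⇑(u i)) ⬝ᵥ (Uᵀ *ᵥ ⇑(u i)) + (Vᵀ *ᵥ ⇑(q i)) ⬝ᵥ (Vᵀ *ᵥ ⇑(q i))) / 2 := by
    intro i
    have : μ i = (Uᵀ *ᵥ ⇑(u i)) ⬝ᵥ (Vᵀ *ᵥ ⇑(q i)) := by
      rw [hkey i, h, ← mulVec_mulVec, dotProduct_mulVec, ← mulVec_transpose]
    rw [this]
    exact dot_amgm' _ _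

  -- sum of eigenvalues = nuclear norm
  have htrace : nuclearNorm A = ∑ i, μ i := by
    rw [nuclearNorm, Matrix.trace_mul_cycle,
      Matrix.mem_unitaryGroup_iff'.mp (Matrix.posSemidef_conjTranspose_mul_self A).1.eigenvectorUnitary.2,
      Matrix.one_mul, Matrix.trace_diagonal]
    exact Finset.sum_congr rfl fun i _ => rfl
  -- Bessel bound for V side
  have hV : ∑ i, (Vᵀ *ᵥ ⇑(q i)) ⬝ᵥ (Vᵀ *ᵥ ⇑(q i)) ≤ frobSq V := by
    set y : Fin r → EuclideanSpace ℝ (Fin p) := fun c => WithLp.toLp 2 (fun j => V j c) with hydef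
    have hterm : ∀ (x : EuclideanSpace ℝ (Fin p)),
        (Vᵀ *ᵥ ⇑x) ⬝ᵥ (Vᵀ *ᵥ ⇑x) = ∑ c, ⟪y c, x⟫ ^ 2 := by
      intro x
      rw [dotProduct]
      refine Finset.sum_congr rfl fun c _ => ?_
      rw [inner_eq_dot']
      simp [mulVec, dotProduct, transpose_apply, hydef, sq]
    calc ∑ i, (Vᵀ *ᵥ ⇑(q i)) ⬝ᵥ (Vᵀ *ᵥ ⇑(q i)) = ∑ i, ∑ c, ⟪y c, q i⟫ ^ 2 := by
          exact Finset.sum_congr rfl fun i _ => hterm (q i)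
      _ = ∑ c, ∑ i, ⟪y c, q i⟫ ^ 2 := Finset.sum_comm
      _ ≤ ∑ c, ‖y c‖ ^ 2 := by
          refine Finset.sum_le_sum fun c _ => ?_
          have := q.orthonormal.sum_inner_products_le (s := Finset.univ) (y c)
          calc ∑ i, ⟪y c, q i⟫ ^ 2 = ∑ i, ‖⟪q i, y c⟫‖ ^ 2 := by
                refine Finset.sum_congr rfl fun i _ => ?_
                rw [real_inner_comm, Real.norm_eq_abs, sq_abs]
            _ ≤ ‖y c‖ ^ 2 := this
      _ = frobSq V := by
          rw [frobSq, Finset.sum_comm]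
          refine Finset.sum_congr rfl fun c _ => ?_
          rw [norm_sq_eq_dot']
          simp [dotProduct, hydef, sq]
  -- Bessel bound for U side
  have hu0 : ∀ i, μ i = 0 → u i = 0 := by
    intro i h0
    rw [hudef]
    simp [h0]
  have hOrtho : Orthonormal ℝ (fun t : {i : Fin p // μ i ≠ 0} => u t.1) := by
    rw [orthonormal_iff_ite]
    intro s t
    have hst : ⟪u s.1, u t.1⟫ =
        (μ s.1)⁻¹ * ((μ t.1)⁻¹ * (μ t.1 ^ 2 * if s.1 = t.1 then 1 else 0)) := by
      rw [inner_eq_dot']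
      show ((μ s.1)⁻¹ • (A *ᵥ ⇑(q s.1))) ⬝ᵥ ((μ t.1)⁻¹ • (A *ᵥ ⇑(q t.1))) = _
      rw [smul_dotProduct, dotProduct_smul, hcross, smul_eq_mul, smul_eq_mul]
    rw [hst]
    rcases eq_or_ne s t with rfl | hne
    · simp only [if_pos rfl]
      have hs : μ s.1 ≠ 0 := s.2
      field_simp
    · have : s.1 ≠ t.1 := fun hc => hne (Subtype.ext hc)
      simp [this, if_neg hne]
  have hU : ∑ i, (Uᵀ *ᵥ ⇑(u i)) ⬝ᵥ (Uᵀ *ᵥ ⇑(u i)) ≤ frobSq U := by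
    set x : Fin r → EuclideanSpace ℝ (Fin n) := fun c => WithLp.toLp 2 (fun j => U j c) with hxdef
    have hterm : ∀ (w : EuclideanSpace ℝ (Fin n)),
        (Uᵀ *ᵥ ⇑w) ⬝ᵥ (Uᵀ *ᵥ ⇑w) = ∑ c, ⟪x c, w⟫ ^ 2 := by
      intro w
      rw [dotProduct]
      refine Finset.sum_congr rfl fun c _ => ?_
      rw [inner_eq_dot']
      simp [mulVec, dotProduct, transpose_apply, hxdef, sq]
    have hzero : ∀ i ∈ Finset.univ.filter (fun i => ¬ μ i ≠ 0),
        (Uᵀ *ᵥ ⇑(u i)) ⬝ᵥ (Uᵀ *ᵥ ⇑(u i)) = 0 := by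
      intro i hi
      simp only [Finset.mem_filter, not_not] at hi
      rw [hu0 i hi.2]
      simp
    calc ∑ i, (Uᵀ *ᵥ ⇑(u i)) ⬝ᵥ (Uᵀ *ᵥ ⇑(u i))
        = ∑ i ∈ Finset.univ.filter (fun i => μ i ≠ 0), (Uᵀ *ᵥ ⇑(u i)) ⬝ᵥ (Uᵀ *ᵥ ⇑(u i)) := by
          rw [← Finset.sum_filter_add_sum_filter_not Finset.univ (fun i => μ i ≠ 0),
            Finset.sum_eq_zero hzero, add_zero]
      _ = ∑ t : {i : Fin p // μ i ≠ 0}, (Uᵀ *ᵥ ⇑(u t.1)) ⬝ᵥ (Uᵀ *ᵥ ⇑(u t.1)) := by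
          rw [← Finset.sum_subtype (Finset.univ.filter (fun i => μ i ≠ 0))
            (fun i => by simp) (fun i => (Uᵀ *ᵥ ⇑(u i)) ⬝ᵥ (Uᵀ *ᵥ ⇑(u i)))]
      _ = ∑ t : {i : Fin p // μ i ≠ 0}, ∑ c, ⟪x c, u t.1⟫ ^ 2 := by
          exact Finset.sum_congr rfl fun t _ => hterm (u t.1)
      _ = ∑ c, ∑ t : {i : Fin p // μ i ≠ 0}, ⟪x c, u t.1⟫ ^ 2 := Finset.sum_comm
      _ ≤ ∑ c, ‖x c‖ ^ 2 := by
          refine Finset.sum_le_sum fun c _ => ?_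
          have := hOrtho.sum_inner_products_le (s := Finset.univ) (x c)
          calc ∑ t : {i : Fin p // μ i ≠ 0}, ⟪x c, u t.1⟫ ^ 2
              = ∑ t : {i : Fin p // μ i ≠ 0}, ‖⟪u t.1, x c⟫‖ ^ 2 := by
                refine Finset.sum_congr rfl fun t _ => ?_
                rw [real_inner_comm, Real.norm_eq_abs, sq_abs]
            _ ≤ ‖x c‖ ^ 2 := this
      _ = frobSq U := by
          rw [frobSq, Finset.sum_comm]
          refine Finset.sum_congr rfl fun c _ => ?_
          rw [norm_sq_eq_dot']
          simp [dotProduct, hxdef, sq]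
  -- combine
  calc nuclearNorm A = ∑ i, μ i := htrace
    _ ≤ ∑ i, ((Uᵀ *ᵥ ⇑(u i)) ⬝ᵥ (Uᵀ *ᵥ ⇑(u i)) + (Vᵀ *ᵥ ⇑(q i)) ⬝ᵥ (Vᵀ *ᵥ ⇑(q i))) / 2 :=
        Finset.sum_le_sum fun i _ => hbound i
    _ = ((∑ i, (Uᵀ *ᵥ ⇑(u i)) ⬝ᵥ (Uᵀ *ᵥ ⇑(u i))) + ∑ i, (Vᵀ *ᵥ ⇑(q i)) ⬝ᵥ (Vᵀ *ᵥ ⇑(q i))) / 2 := by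
        rw [← Finset.sum_div, Finset.sum_add_distrib]
    _ ≤ (frobSq U + frobSq V) / 2 := by
        have := add_le_add hU hV
        linarith
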